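/- Under the hypotheses of the monotonic method construction (s ≥ 3, w_0 > 1, w_1 = (1 + T_{s−1}(w_0))/T_{s−1}′(w_0), b_j = 1/(1 + T_j(w_0)), γ_s = b_{s−1}/(2 s w_1), δ_s = −b_{s−1}/(2(s−2) w_1)), the polynomial R_s(x) = 1 + b_{s−1} x + (γ_s/b_s)(R̃_s(x) − 1) + (δ_s/b_{s−2})(R̃_{s−2}(x) − 1), where R̃_j(x) = 1 + b_j(T_j(w_0 + w_1 x) − T_j(w_0)), satisfies R_s′(x) = R̃_{s−1}(x) for all x. -/

import Mathlib

open Real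

/-- Chebyshev polynomial of the first kind, as a real function. -/
noncomputable def chebT : ℕ → ℝ → ℝ
  | 0, _ => 1
  | 1, x => x
  | (n+2), x => 2 * x * chebT (n+1) x - chebT n x

/-!
With `F = T_s / (2s) - T_{s-2} / (2(s-2))` one has
`R_s(x) = 1 + b_{s-1} (x + (F(w_0 + w_1 x) - F(w_0)) / w_1)`, and `F' = T_{s-1}` since
`T_n' = n U_{n-1}` and `U_{s-1} - U_{s-3} = 2 T_{s-1}`. Hence `R_s' = b_{s-1} (1 + T_{s-1}(w_0 + w_1 x))`,
which is `R̃_{s-1}` because `b_{s-1} (1 + T_{s-1}(w_0)) = 1`. All the divisions are genuine: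
writing `w_0 = cosh θ` with `θ > 0`, `T_n(w_0) = cosh nθ ≥ 1` and `T_n'(w_0) = n sinh nθ / sinh θ > 0`.
-/

open Polynomial Polynomial.Chebyshev

theorem chebT_eq_eval_T : ∀ (n : ℕ) (x : ℝ), chebT n x = (T ℝ n).eval x
  | 0, x => by simp [chebT]
  | 1, x => by simp [chebT]
  | n + 2, x => by
    rw [chebT, chebT_eq_eval_T (n + 1), chebT_eq_eval_T n, Nat.cast_add n 2, Nat.cast_ofNat,
      T_add_two]
    simp

theorem hasDerivAt_chebT (n : ℕ) (x : ℝ) :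
    HasDerivAt (chebT n) (n * (U ℝ (n - 1 : ℤ)).eval x) x := by
  have h := (T ℝ n).hasDerivAt x
  rw [T_derivative_eq_U] at h
  simpa [← chebT_eq_eval_T] using h

theorem one_le_chebT (n : ℕ) {x : ℝ} (hx : 1 ≤ x) : 1 ≤ chebT n x := by
  obtain ⟨θ, -, rfl⟩ := cosh_surjOn hx
  rw [chebT_eq_eval_T, T_real_cosh]
  exact one_le_cosh _

theorem deriv_chebT_pos {n : ℕ} (hn : 1 ≤ n) {x : ℝ} (hx : 1 < x) : 0 < deriv (chebT n) x := by
  obtain ⟨θ, hθ_nonneg, rfl⟩ := cosh_surjOn (Set.mem_Ici.2 hx.le)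
  have hθ : 0 < θ := lt_of_le_of_ne hθ_nonneg (by rintro rfl; simp at hx)
  have hU : 0 < (U ℝ (n - 1 : ℤ)).eval (cosh θ) := by
    refine pos_of_mul_pos_left ?_ (sinh_pos_iff.2 hθ).le
    rw [U_real_cosh]
    exact sinh_pos_iff.2 (by push_cast; nlinarith [show (1 : ℝ) ≤ n by exact_mod_cast hn])
  rw [(hasDerivAt_chebT n _).deriv]
  exact mul_pos (by exact_mod_cast hn) hU

theorem hasDerivAt_chebT_div (n : ℕ) (x : ℝ) :
    HasDerivAt (fun u => chebT n u / (2 * n)) ((U ℝ (n - 1 : ℤ)).eval x / 2) x := by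
  refine ((hasDerivAt_chebT n x).div_const (2 * n)).congr_deriv ?_
  rcases n.eq_zero_or_pos with rfl | hn
  -- for `n = 0` both sides vanish: Lean's `x / 0 = 0` on the left, `U_{-1} = 0` on the right
  · simp
  · field_simp

theorem hasDerivAt_chebT_div_sub_chebT_div {s : ℕ} (hs : 2 ≤ s) (x : ℝ) :
    HasDerivAt (fun u => chebT s u / (2 * s) - chebT (s - 2) u / (2 * ((s : ℝ) - 2)))
      (chebT (s - 1) x) x := by
  obtain ⟨m, rfl⟩ : ∃ m, s = m + 2 := ⟨s - 2, by omega⟩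
  have hU := congrArg (eval x) (two_mul_T_eq_U_sub_U ℝ (m - 1 : ℤ))
  have hT := (hasDerivAt_chebT_div (m + 2) x).fun_sub (hasDerivAt_chebT_div m x)
  simp only [Nat.add_sub_cancel, Nat.cast_add, Nat.cast_ofNat, add_sub_cancel_right] at hT ⊢
  refine hT.congr_deriv ?_
  simp only [eval_mul, eval_sub, eval_ofNat] at hU
  rw [chebT_eq_eval_T]
  push_cast at hU ⊢
  ring_nf at hU ⊢
  linarith

theorem stmt11 (s : ℕ) (hs : 3 ≤ s) (w0 : ℝ) (hw0 : 1 < w0) :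
    let w1 : ℝ := (1 + chebT (s-1) w0) / deriv (chebT (s-1)) w0
    let b : ℕ → ℝ := fun k => 1 / (1 + chebT k w0)
    let γ : ℝ := b (s-1) / (2 * s * w1)
    let δ : ℝ := -(b (s-1)) / (2 * (s-2) * w1)
    let Rt : ℕ → ℝ → ℝ := fun k x => 1 + b k * (chebT k (w0 + w1 * x) - chebT k w0)
    let R : ℝ → ℝ := fun x => 1 + b (s-1) * x
      + (γ / b s) * (Rt s x - 1) + (δ / b (s-2)) * (Rt (s-2) x - 1)
    ∀ x : ℝ, deriv R x = Rt (s-1) x := by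
  intro w1 b γ δ Rt R x
  have hT (k : ℕ) : 1 + chebT k w0 ≠ 0 := by linarith [one_le_chebT k hw0.le]
  have hw1 : w1 ≠ 0 := div_ne_zero (hT _) (deriv_chebT_pos (by omega) hw0).ne'
  set F := fun u => chebT s u / (2 * s) - chebT (s - 2) u / (2 * ((s : ℝ) - 2))
  have hR : R = fun y => 1 + b (s - 1) * (y + (F (w0 + w1 * y) - F w0) / w1) := by
    funext y
    simp only [R, Rt, γ, δ, F, b]
    field_simp [hT]
    ring
  have hF : HasDerivAt (fun y => F (w0 + w1 * y)) (chebT (s - 1) (w0 + w1 * x) * w1) x :=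
    (hasDerivAt_chebT_div_sub_chebT_div (by omega) _).comp x
      ((((hasDerivAt_id x).const_mul w1).const_add w0).congr_deriv (mul_one w1))
  have hR_deriv : HasDerivAt (fun y => 1 + b (s - 1) * (y + (F (w0 + w1 * y) - F w0) / w1))
      (b (s - 1) * (1 + chebT (s - 1) (w0 + w1 * x) * w1 / w1)) x :=
    (((hasDerivAt_id' x).fun_add ((hF.sub_const (F w0)).div_const w1)).const_mul
      (b (s - 1))).const_add 1
  rw [hR, hR_deriv.deriv]
  simp only [Rt, b]
  field_simp [hT]
  ring
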